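/- arXiv:2304.11652 — 3 statements merged into one kernel-verified Lean document; each statement's English description precedes it below -/
import Mathlib

section
/- (Hyperteam Refinement) Let φ be an ADIF formula and 𝕏, 𝕏' two hyperteams over supersets of sup(φ) with 𝕏 ⊑_{free(φ)} 𝕏'. Then: (1) if 𝔄, 𝕏 ⊨^{∃∀} φ then 𝔄, 𝕏' ⊨^{∃∀} φ; (2) if 𝔄, 𝕏' ⊨^{∀∃} φ then 𝔄, 𝕏 ⊨^{∀∃} φ. -/
open scoped Classical

namespace ADIF

/-- A relational first-order structure over a signature given by relation
symbols `RSym` with arities `ar`. -/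
structure Struct (RSym : Type) (ar : RSym → ℕ) where
  A : Type
  nonempty : Nonempty A
  interp : ∀ R : RSym, (Fin (ar R) → A) → Prop

variable {Var RSym : Type} {ar : RSym → ℕ} {A : Type}

/-- Partial assignments from variables to values. -/
abbrev Asg (Var A : Type) := Var → Option A

/-- Teams of assignments. -/
abbrev Team (Var A : Type) := Set (Asg Var A)

/-- Hyperteams: sets of teams. -/
abbrev Hyperteam (Var A : Type) := Set (Team Var A)

/-- The empty assignment. -/
def emptyAsg (Var A : Type) : Asg Var A := fun _ => none

/-- Domain of a partial assignment. -/
def dom (α : Asg Var A) : Set Var := {v | α v ≠ none}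

/-- Restriction of an assignment to a set of variables. -/
noncomputable def restrictA (α : Asg Var A) (W : Set Var) : Asg Var A :=
  fun v => if v ∈ W then α v else none

/-- Restriction of a team. -/
noncomputable def restrictT (X : Team Var A) (W : Set Var) : Team Var A :=
  (fun α => restrictA α W) '' X

/-- Restriction of a hyperteam. -/
noncomputable def restrictH (𝕏 : Hyperteam Var A) (W : Set Var) : Hyperteam Var A :=
  (fun X => restrictT X W) '' 𝕏

/-- The preorder `⊑` on hyperteams. -/
def incl (𝕏₁ 𝕏₂ : Hyperteam Var A) : Prop :=
  ∀ X₁ ∈ 𝕏₁, ∃ X₂ ∈ 𝕏₂, X₂ ⊆ X₁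

/-- The equivalence `≡` on hyperteams. -/
def equivH (𝕏₁ 𝕏₂ : Hyperteam Var A) : Prop :=
  incl 𝕏₁ 𝕏₂ ∧ incl 𝕏₂ 𝕏₁

/-- The preorder `⊑_W` on hyperteams, relativized to variables in `W`. -/
noncomputable def inclW (W : Set Var) (𝕏₁ 𝕏₂ : Hyperteam Var A) : Prop :=
  incl (restrictH 𝕏₁ W) (restrictH 𝕏₂ W)

/-- The equivalence `≡_W` on hyperteams, relativized to variables in `W`. -/
noncomputable def equivW (W : Set Var) (𝕏₁ 𝕏₂ : Hyperteam Var A) : Prop :=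
  equivH (restrictH 𝕏₁ W) (restrictH 𝕏₂ W)

/-- The dual hyperteam `𝕏~`: the set of images of all choice functions for `𝕏`. -/
def dualH (𝕏 : Hyperteam Var A) : Hyperteam Var A :=
  {Y | ∃ χ : Team Var A → Asg Var A, (∀ X ∈ 𝕏, χ X ∈ X) ∧ Y = χ '' 𝕏}

/-- A hyperteam is proper if it is neither empty nor null. -/
def Proper (𝕏 : Hyperteam Var A) : Prop := 𝕏 ≠ ∅ ∧ ∅ ∉ 𝕏

/-- All assignments in all teams of `𝕏` are defined exactly on `U`. -/
def HyperteamOn (𝕏 : Hyperteam Var A) (U : Set Var) : Prop :=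
  ∀ X ∈ 𝕏, ∀ α ∈ X, dom α = U

/-- `𝕏` is a genuine hyperteam: all its assignments share the same domain. -/
def IsHyperteam (𝕏 : Hyperteam Var A) : Prop := ∃ U : Set Var, HyperteamOn 𝕏 U

/-- `𝕏` is a hyperteam over some superset of `V`. -/
def OverSup (𝕏 : Hyperteam Var A) (V : Set Var) : Prop :=
  ∃ U : Set Var, V ⊆ U ∧ HyperteamOn 𝕏 U

/-- `W`-uniform functions from assignments to values. -/
def FW (W : Set Var) : Set (Asg Var A → A) :=
  {F | ∀ α : Asg Var A, F α = F (restrictA α W)}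

/-- Update of an assignment at a variable. -/
noncomputable def updateA (α : Asg Var A) (x : Var) (a : A) : Asg Var A :=
  fun v => if v = x then some a else α v

/-- Extension of an assignment by a function for a variable. -/
noncomputable def extA (α : Asg Var A) (F : Asg Var A → A) (x : Var) : Asg Var A :=
  updateA α x (F α)

/-- Extension of a team by a function for a variable. -/
noncomputable def extT (X : Team Var A) (F : Asg Var A → A) (x : Var) : Team Var A :=
  (fun α => extA α F x) '' X

/-- Extension of a hyperteam with a variable, `W`-uniformly. -/
noncomputable def extH (W : Set Var) (𝕏 : Hyperteam Var A) (x : Var) : Hyperteam Var A :=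
  {Y | ∃ X ∈ 𝕏, ∃ F ∈ FW W, Y = extT X F x}

/-- Bipartitions of a hyperteam. -/
def Bipartition (𝕏₁ 𝕏₂ 𝕏 : Hyperteam Var A) : Prop :=
  𝕏₁ ∩ 𝕏₂ = ∅ ∧ 𝕏₁ ∪ 𝕏₂ = 𝕏

/-- Cylindrification of a team with respect to a variable. -/
noncomputable def cylT (X : Team Var A) (x : Var) : Team Var A :=
  {β | ∃ α ∈ X, ∃ a : A, β = updateA α x a}

/-- Cylindrification of a hyperteam with respect to a variable. -/
noncomputable def cylH (𝕏 : Hyperteam Var A) (x : Var) : Hyperteam Var A :=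
  (fun X => cylT X x) '' 𝕏

/-- ADIF formulas over variables `Var` and a relational signature. -/
inductive Formula (Var RSym : Type) (ar : RSym → ℕ) : Type
  | fls : Formula Var RSym ar
  | tru : Formula Var RSym ar
  | atom (R : RSym) (xs : Fin (ar R) → Var) : Formula Var RSym ar
  | not (φ : Formula Var RSym ar) : Formula Var RSym ar
  | and (φ ψ : Formula Var RSym ar) : Formula Var RSym ar
  | or (φ ψ : Formula Var RSym ar) : Formula Var RSym ar
  | ex (s : Bool) (W : Finset Var) (x : Var) (φ : Formula Var RSym ar) : Formula Var RSym ar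
  | all (s : Bool) (W : Finset Var) (x : Var) (φ : Formula Var RSym ar) : Formula Var RSym ar

/-- The constraint set `⟦±W⟧`: `W` itself for `+` (`s = true`),
its complement for `−` (`s = false`). -/
def denot (s : Bool) (W : Finset Var) : Set Var :=
  if s then (↑W : Set Var) else (↑W : Set Var)ᶜ

/-- Support variables of an ADIF formula. -/
def supv : Formula Var RSym ar → Set Var
  | .fls => ∅
  | .tru => ∅
  | .atom _ xs => Set.range xs
  | .not φ => supv φ
  | .and φ ψ => supv φ ∪ supv ψ
  | .or φ ψ => supv φ ∪ supv ψ
  | .ex _ _ x φ => supv φ \ {x}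
  | .all _ _ x φ => supv φ \ {x}

/-- Free variables of an ADIF formula. -/
noncomputable def freev : Formula Var RSym ar → Set Var
  | .fls => ∅
  | .tru => ∅
  | .atom _ xs => Set.range xs
  | .not φ => freev φ
  | .and φ ψ => freev φ ∪ freev ψ
  | .or φ ψ => freev φ ∪ freev ψ
  | .ex s W x φ => if x ∈ freev φ then (freev φ \ {x}) ∪ denot s W else freev φ
  | .all s W x φ => if x ∈ freev φ then (freev φ \ {x}) ∪ denot s W else freev φ

/-- Alternation flags. -/
inductive Flag : Type
  | EA : Flag
  | AE : Flag

/-- The dual alternation flag. -/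
def Flag.dual : Flag → Flag
  | .EA => .AE
  | .AE => .EA

/-- Satisfaction of an atom by a (partial) assignment. -/
def atomSat (𝔄 : Struct RSym ar) (R : RSym) (xs : Fin (ar R) → Var)
    (α : Asg Var 𝔄.A) : Prop :=
  ∃ v : Fin (ar R) → 𝔄.A, (∀ i, α (xs i) = some (v i)) ∧ 𝔄.interp R v

/-- Hodges' alternating satisfaction relation `𝔄, 𝕏 ⊨^fl φ` for ADIF. -/
noncomputable def sat (𝔄 : Struct RSym ar) :
    Formula Var RSym ar → Flag → Hyperteam Var 𝔄.A → Prop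
  | .fls, .EA, 𝕏 => ∅ ∈ 𝕏
  | .fls, .AE, 𝕏 => 𝕏 = ∅
  | .tru, .EA, 𝕏 => 𝕏 ≠ ∅
  | .tru, .AE, 𝕏 => ∅ ∉ 𝕏
  | .atom R xs, .EA, 𝕏 => ∃ X ∈ 𝕏, ∀ α ∈ X, atomSat 𝔄 R xs α
  | .atom R xs, .AE, 𝕏 => ∀ X ∈ 𝕏, ∃ α ∈ X, atomSat 𝔄 R xs α
  | .not φ, fl, 𝕏 => ¬ sat 𝔄 φ fl.dual 𝕏
  | .and φ ψ, .EA, 𝕏 =>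
      ∀ 𝕏₁ 𝕏₂, Bipartition 𝕏₁ 𝕏₂ 𝕏 → sat 𝔄 φ .EA 𝕏₁ ∨ sat 𝔄 ψ .EA 𝕏₂
  | .and φ ψ, .AE, 𝕏 =>
      ∀ 𝕏₁ 𝕏₂, Bipartition 𝕏₁ 𝕏₂ (dualH 𝕏) → sat 𝔄 φ .EA 𝕏₁ ∨ sat 𝔄 ψ .EA 𝕏₂
  | .or φ ψ, .AE, 𝕏 =>
      ∃ 𝕏₁ 𝕏₂, Bipartition 𝕏₁ 𝕏₂ 𝕏 ∧ sat 𝔄 φ .AE 𝕏₁ ∧ sat 𝔄 ψ .AE 𝕏₂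
  | .or φ ψ, .EA, 𝕏 =>
      ∃ 𝕏₁ 𝕏₂, Bipartition 𝕏₁ 𝕏₂ (dualH 𝕏) ∧ sat 𝔄 φ .AE 𝕏₁ ∧ sat 𝔄 ψ .AE 𝕏₂
  | .ex s W x φ, .EA, 𝕏 => sat 𝔄 φ .EA (extH (denot s W) 𝕏 x)
  | .ex s W x φ, .AE, 𝕏 => sat 𝔄 φ .EA (extH (denot s W) (dualH 𝕏) x)
  | .all s W x φ, .AE, 𝕏 => sat 𝔄 φ .AE (extH (denot s W) 𝕏 x)
  | .all s W x φ, .EA, 𝕏 => sat 𝔄 φ .AE (extH (denot s W) (dualH 𝕏) x)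

/-- `φ` is `fl`-satisfiable on `𝔄`: some proper hyperteam over `sup φ` satisfies it. -/
noncomputable def SatOn (𝔄 : Struct RSym ar) (fl : Flag) (φ : Formula Var RSym ar) : Prop :=
  ∃ 𝕏 : Hyperteam Var 𝔄.A, HyperteamOn 𝕏 (supv φ) ∧ Proper 𝕏 ∧ sat 𝔄 φ fl 𝕏

/-- `φ` is `fl`-satisfiable: `fl`-satisfiable on some structure. -/
noncomputable def Satisfiable (Var : Type) {RSym : Type} {ar : RSym → ℕ}
    (fl : Flag) (φ : Formula Var RSym ar) : Prop :=
  ∃ 𝔄 : Struct RSym ar, SatOn 𝔄 fl φ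

/-- `φ ⇛^fl ψ`: `fl`-implication between ADIF formulas. -/
noncomputable def ImpliesF (fl : Flag) (φ ψ : Formula Var RSym ar) : Prop :=
  ∀ 𝔄 : Struct RSym ar, ∀ 𝕏 : Hyperteam Var 𝔄.A,
    OverSup 𝕏 (supv φ ∪ supv ψ) → sat 𝔄 φ fl 𝕏 → sat 𝔄 ψ fl 𝕏

/-- `φ ≅^fl ψ`: `fl`-equivalence between ADIF formulas. -/
noncomputable def EquivFlagF (fl : Flag) (φ ψ : Formula Var RSym ar) : Prop :=
  ImpliesF fl φ ψ ∧ ImpliesF fl ψ φ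

/-- `φ ≅ ψ`: equivalence for both alternation flags. -/
noncomputable def EquivF (φ ψ : Formula Var RSym ar) : Prop :=
  ∀ fl : Flag, EquivFlagF fl φ ψ

end ADIF

namespace ADIF

variable {Var RSym : Type} {ar : RSym → ℕ} {A : Type}

/-- A formula is atomic if it is `⊥`, `⊤` or a relational atom. -/
def IsAtomic : Formula Var RSym ar → Prop
  | .fls => True
  | .tru => True
  | .atom _ _ => True
  | _ => False

/-- Negation normal form: negation is applied only to atomic formulas. -/
def IsNNF : Formula Var RSym ar → Prop
  | .fls => True
  | .tru => True
  | .atom _ _ => True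
  | .not φ => IsAtomic φ
  | .and φ ψ => IsNNF φ ∧ IsNNF ψ
  | .or φ ψ => IsNNF φ ∧ IsNNF ψ
  | .ex _ _ _ φ => IsNNF φ
  | .all _ _ _ φ => IsNNF φ

/-- An item `Q^{±W}x` of a quantifier prefix: `q = true` means `∃`,
`q = false` means `∀`; `s = true` means `+W`, `s = false` means `−W`. -/
structure QItem (Var : Type) where
  q : Bool
  s : Bool
  W : Finset Var
  x : Var

/-- The constraint set of a quantifier-prefix item. -/
def QItem.constr (i : QItem Var) : Set Var := denot i.s i.W

/-- Well-formed quantifier prefixes: each variable is quantified at most once,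
does not occur in its own constraint set, and is not quantified in the scope of
a quantifier whose constraint set contains it. -/
def GoodPrefix : List (QItem Var) → Prop
  | [] => True
  | i :: rest =>
      i.x ∉ i.constr ∧ (∀ j ∈ rest, j.x ≠ i.x ∧ j.x ∉ i.constr) ∧ GoodPrefix rest

/-- Prefixing a formula by a quantifier prefix. -/
def applyPrefix : List (QItem Var) → Formula Var RSym ar → Formula Var RSym ar
  | [], φ => φ
  | i :: rest, φ =>
      if i.q then Formula.ex i.s i.W i.x (applyPrefix rest φ)
      else Formula.all i.s i.W i.x (applyPrefix rest φ)

/-- The extension operator `ext^fl(𝕏, Q^{±W}x)` for a single quantifier. -/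
noncomputable def extQ (fl : Flag) (𝕏 : Hyperteam Var A) (i : QItem Var) : Hyperteam Var A :=
  match fl, i.q with
  | .EA, true => extH (denot i.s i.W) 𝕏 i.x
  | .AE, false => extH (denot i.s i.W) 𝕏 i.x
  | .EA, false => dualH (extH (denot i.s i.W) (dualH 𝕏) i.x)
  | .AE, true => dualH (extH (denot i.s i.W) (dualH 𝕏) i.x)

/-- The extension operator `ext^fl(𝕏, ℘)` for a quantifier prefix. -/
noncomputable def extP (fl : Flag) : Hyperteam Var A → List (QItem Var) → Hyperteam Var A
  | 𝕏, [] => 𝕏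
  | 𝕏, i :: rest => extP fl (extQ fl 𝕏 i) rest

/-- Ordinary first-order formulas over the signature. -/
inductive FForm (Var RSym : Type) (ar : RSym → ℕ) : Type
  | fls : FForm Var RSym ar
  | tru : FForm Var RSym ar
  | atom (R : RSym) (xs : Fin (ar R) → Var) : FForm Var RSym ar
  | not (φ : FForm Var RSym ar) : FForm Var RSym ar
  | and (φ ψ : FForm Var RSym ar) : FForm Var RSym ar
  | or (φ ψ : FForm Var RSym ar) : FForm Var RSym ar
  | ex (x : Var) (φ : FForm Var RSym ar) : FForm Var RSym ar
  | all (x : Var) (φ : FForm Var RSym ar) : FForm Var RSym ar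

/-- Free variables of a first-order formula. -/
def folFree : FForm Var RSym ar → Set Var
  | .fls => ∅
  | .tru => ∅
  | .atom _ xs => Set.range xs
  | .not φ => folFree φ
  | .and φ ψ => folFree φ ∪ folFree ψ
  | .or φ ψ => folFree φ ∪ folFree ψ
  | .ex x φ => folFree φ \ {x}
  | .all x φ => folFree φ \ {x}

/-- Standard Tarskian satisfaction `𝔄, α ⊨_FOL φ` for first-order formulas. -/
noncomputable def folSat (𝔄 : Struct RSym ar) : FForm Var RSym ar → Asg Var 𝔄.A → Prop
  | .fls, _ => False
  | .tru, _ => True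
  | .atom R xs, α => atomSat 𝔄 R xs α
  | .not φ, α => ¬ folSat 𝔄 φ α
  | .and φ ψ, α => folSat 𝔄 φ α ∧ folSat 𝔄 ψ α
  | .or φ ψ, α => folSat 𝔄 φ α ∨ folSat 𝔄 ψ α
  | .ex x φ, α => ∃ a : 𝔄.A, folSat 𝔄 φ (updateA α x a)
  | .all x φ, α => ∀ a : 𝔄.A, folSat 𝔄 φ (updateA α x a)

/-- The FOL fragment of ADIF: every quantifier is `Q^{+W}x` with
`W = sup(φ) ∖ {x}`. -/
def IsFOLFrag : Formula Var RSym ar → Prop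
  | .fls => True
  | .tru => True
  | .atom _ _ => True
  | .not φ => IsFOLFrag φ
  | .and φ ψ => IsFOLFrag φ ∧ IsFOLFrag ψ
  | .or φ ψ => IsFOLFrag φ ∧ IsFOLFrag ψ
  | .ex s W x φ => s = true ∧ (↑W : Set Var) = supv φ \ {x} ∧ IsFOLFrag φ
  | .all s W x φ => s = true ∧ (↑W : Set Var) = supv φ \ {x} ∧ IsFOLFrag φ

/-- Tarskian satisfaction of an ADIF formula (in the FOL fragment) by an
assignment, quantifier decorations being ignored. -/
noncomputable def tarskiSat (𝔄 : Struct RSym ar) : Formula Var RSym ar → Asg Var 𝔄.A → Prop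
  | .fls, _ => False
  | .tru, _ => True
  | .atom R xs, α => atomSat 𝔄 R xs α
  | .not φ, α => ¬ tarskiSat 𝔄 φ α
  | .and φ ψ, α => tarskiSat 𝔄 φ α ∧ tarskiSat 𝔄 ψ α
  | .or φ ψ, α => tarskiSat 𝔄 φ α ∨ tarskiSat 𝔄 ψ α
  | .ex _ _ x φ, α => ∃ a : 𝔄.A, tarskiSat 𝔄 φ (updateA α x a)
  | .all _ _ x φ, α => ∀ a : 𝔄.A, tarskiSat 𝔄 φ (updateA α x a)

end ADIF

namespace ADIF


variable {Var RSym : Type} {ar : RSym → ℕ} {A : Type}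

lemma restrictA_mem_restrictT {α : Asg Var A} {X : Team Var A} (h : α ∈ X) (W : Set Var) :
    restrictA α W ∈ restrictT X W := ⟨α, h, rfl⟩

lemma restrictA_restrictA_of_subset (α : Asg Var A) {V W : Set Var} (h : W ⊆ V) :
    restrictA (restrictA α V) W = restrictA α W := by
  funext v
  by_cases hv : v ∈ W
  · simp [restrictA, hv, h hv]
  · simp [restrictA, hv]

lemma restrictT_restrictT_of_subset (X : Team Var A) {V W : Set Var} (h : W ⊆ V) :
    restrictT (restrictT X V) W = restrictT X W := by
  unfold restrictT
  rw [← Set.image_comp]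
  exact Set.image_congr' (fun α => restrictA_restrictA_of_subset α h)

lemma inclW_iff {W : Set Var} {𝕏 𝕏' : Hyperteam Var A} :
    inclW W 𝕏 𝕏' ↔ ∀ X ∈ 𝕏, ∃ Y ∈ 𝕏', restrictT Y W ⊆ restrictT X W := by
  constructor
  · intro h X hX
    obtain ⟨Z, hZ, hsub⟩ := h (restrictT X W) ⟨X, hX, rfl⟩
    obtain ⟨Y, hY, rfl⟩ := hZ
    exact ⟨Y, hY, hsub⟩
  · rintro h Z ⟨X, hX, rfl⟩
    obtain ⟨Y, hY, hsub⟩ := h X hX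
    exact ⟨restrictT Y W, ⟨Y, hY, rfl⟩, hsub⟩

lemma inclW_mono {V W : Set Var} (hWV : W ⊆ V) {𝕏 𝕏' : Hyperteam Var A}
    (h : inclW V 𝕏 𝕏') : inclW W 𝕏 𝕏' := by
  rw [inclW_iff] at h ⊢
  intro X hX
  obtain ⟨Y, hY, hsub⟩ := h X hX
  refine ⟨Y, hY, ?_⟩
  rw [← restrictT_restrictT_of_subset Y hWV, ← restrictT_restrictT_of_subset X hWV]
  exact Set.image_mono hsub

lemma incl_trans {𝕏₁ 𝕏₂ 𝕏₃ : Hyperteam Var A}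
    (h12 : incl 𝕏₁ 𝕏₂) (h23 : incl 𝕏₂ 𝕏₃) : incl 𝕏₁ 𝕏₃ := by
  intro X₁ hX₁
  obtain ⟨X₂, hX₂, hs⟩ := h12 X₁ hX₁
  obtain ⟨X₃, hX₃, hs'⟩ := h23 X₂ hX₂
  exact ⟨X₃, hX₃, hs'.trans hs⟩

lemma incl_dual {𝕏 𝕏' : Hyperteam Var A} (h : incl 𝕏 𝕏') :
    incl (dualH 𝕏') (dualH 𝕏) := by
  rintro _ ⟨χ', hχ'mem, rfl⟩
  classical
  let f : Team Var A → Team Var A := fun X =>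
    if hX : X ∈ 𝕏 then (h X hX).choose else X
  have hf : ∀ X ∈ 𝕏, f X ∈ 𝕏' ∧ f X ⊆ X := by
    intro X hX
    have hc := (h X hX).choose_spec
    simp only [f, dif_pos hX]
    exact ⟨hc.1, hc.2⟩
  refine ⟨χ' ∘ f '' 𝕏, ⟨χ' ∘ f, ?_, rfl⟩, ?_⟩
  · intro X hX
    exact (hf X hX).2 (hχ'mem (f X) (hf X hX).1)
  · rintro _ ⟨X, hX, rfl⟩
    exact ⟨f X, (hf X hX).1, rfl⟩

lemma restrictH_dualH_incl (𝕏 : Hyperteam Var A) (W : Set Var) :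
    incl (restrictH (dualH 𝕏) W) (dualH (restrictH 𝕏 W)) := by
  rintro _ ⟨_, ⟨χ, hχmem, rfl⟩, rfl⟩
  classical
  let χ' : Team Var A → Asg Var A := fun Z =>
    if h : ∃ X, X ∈ 𝕏 ∧ restrictT X W = Z then restrictA (χ h.choose) W
    else emptyAsg Var A
  refine ⟨χ' '' restrictH 𝕏 W, ⟨χ', ?_, rfl⟩, ?_⟩
  · rintro _ ⟨X, hX, rfl⟩
    have hex : ∃ X', X' ∈ 𝕏 ∧ restrictT X' W = restrictT X W := ⟨X, hX, rfl⟩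
    simp only [χ', dif_pos hex]
    have hm := restrictA_mem_restrictT (hχmem _ hex.choose_spec.1) W
    rwa [hex.choose_spec.2] at hm
  · rintro _ ⟨_, ⟨X, hX, rfl⟩, rfl⟩
    have hex : ∃ X', X' ∈ 𝕏 ∧ restrictT X' W = restrictT X W := ⟨X, hX, rfl⟩
    simp only [χ', dif_pos hex]
    exact restrictA_mem_restrictT (Set.mem_image_of_mem χ hex.choose_spec.1) W

lemma dualH_restrictH_incl (𝕏 : Hyperteam Var A) (W : Set Var) :
    incl (dualH (restrictH 𝕏 W)) (restrictH (dualH 𝕏) W) := by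
  rintro _ ⟨χ', hχ'mem, rfl⟩
  classical
  have hmem : ∀ X ∈ 𝕏, χ' (restrictT X W) ∈ restrictT X W := fun X hX =>
    hχ'mem (restrictT X W) ⟨X, hX, rfl⟩
  let χ : Team Var A → Asg Var A := fun X =>
    if hX : X ∈ 𝕏 then (hmem X hX).choose else emptyAsg Var A
  have hχ : ∀ X ∈ 𝕏, χ X ∈ X ∧ restrictA (χ X) W = χ' (restrictT X W) := by
    intro X hX
    have hc := (hmem X hX).choose_spec
    simp only [χ, dif_pos hX]
    exact ⟨hc.1, hc.2⟩
  refine ⟨restrictT (χ '' 𝕏) W, ⟨χ '' 𝕏, ⟨χ, fun X hX => (hχ X hX).1, rfl⟩, rfl⟩, ?_⟩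
  rintro _ ⟨_, ⟨X, hX, rfl⟩, rfl⟩
  exact ⟨restrictT X W, ⟨X, hX, rfl⟩, ((hχ X hX).2).symm⟩

lemma inclW_dual {W : Set Var} {𝕏 𝕏' : Hyperteam Var A}
    (h : inclW W 𝕏 𝕏') : inclW W (dualH 𝕏') (dualH 𝕏) :=
  incl_trans (restrictH_dualH_incl 𝕏' W)
    (incl_trans (incl_dual h) (dualH_restrictH_incl 𝕏 W))

lemma bipart_transfer {W : Set Var} {𝕐 𝕐' 𝕐₁' 𝕐₂' : Hyperteam Var A}
    (h : inclW W 𝕐 𝕐') (hbp : Bipartition 𝕐₁' 𝕐₂' 𝕐') :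
    ∃ 𝕐₁ 𝕐₂, Bipartition 𝕐₁ 𝕐₂ 𝕐 ∧ inclW W 𝕐₁ 𝕐₁' ∧ inclW W 𝕐₂ 𝕐₂' := by
  rw [inclW_iff] at h
  classical
  let f : Team Var A → Team Var A := fun X =>
    if hX : X ∈ 𝕐 then (h X hX).choose else X
  have hf : ∀ X ∈ 𝕐, f X ∈ 𝕐' ∧ restrictT (f X) W ⊆ restrictT X W := by
    intro X hX
    have hc := (h X hX).choose_spec
    simp only [f, dif_pos hX]
    exact ⟨hc.1, hc.2⟩
  refine ⟨{X ∈ 𝕐 | f X ∈ 𝕐₁'}, {X ∈ 𝕐 | f X ∉ 𝕐₁'}, ⟨?_, ?_⟩, ?_, ?_⟩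
  · ext X
    simp only [Set.mem_inter_iff, Set.mem_setOf_eq, Set.mem_empty_iff_false, iff_false]
    tauto
  · ext X
    simp only [Set.mem_union, Set.mem_setOf_eq]
    tauto
  · rw [inclW_iff]
    rintro X ⟨hX, hfX⟩
    exact ⟨f X, hfX, (hf X hX).2⟩
  · rw [inclW_iff]
    rintro X ⟨hX, hfX⟩
    have hmem : f X ∈ 𝕐₂' := by
      have hu : f X ∈ 𝕐₁' ∪ 𝕐₂' := hbp.2 ▸ (hf X hX).1
      exact hu.resolve_left hfX
    exact ⟨f X, hmem, (hf X hX).2⟩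

lemma inclW_ext {Vq Vb D : Set Var} {x : Var}
    (h1 : Vb \ {x} ⊆ Vq) (h2 : x ∈ Vb → D ⊆ Vq)
    {𝕏 𝕏' : Hyperteam Var A} (h : inclW Vq 𝕏 𝕏') :
    inclW Vb (extH D 𝕏 x) (extH D 𝕏' x) := by
  rw [inclW_iff] at h ⊢
  rintro _ ⟨X, hX, F, hF, rfl⟩
  obtain ⟨Y, hY, hsub⟩ := h X hX
  refine ⟨extT Y F x, ⟨Y, hY, F, hF, rfl⟩, ?_⟩
  rintro _ ⟨_, ⟨β, hβ, rfl⟩, rfl⟩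
  obtain ⟨α, hα, heq0⟩ := hsub (restrictA_mem_restrictT hβ Vq)
  have heq : restrictA α Vq = restrictA β Vq := heq0
  have hF' : ∀ γ : Asg Var A, F γ = F (restrictA γ D) := hF
  refine ⟨extA α F x, ⟨α, hα, rfl⟩, ?_⟩
  funext v
  by_cases hv : v ∈ Vb
  · by_cases hvx : v = x
    · subst hvx
      have hFeq : F α = F β := by
        have hD := h2 hv
        rw [hF' α, hF' β, ← restrictA_restrictA_of_subset α hD,
          ← restrictA_restrictA_of_subset β hD, heq]
      simp [restrictA, extA, updateA, hv, hFeq]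
    · have hvVq : v ∈ Vq := h1 ⟨hv, hvx⟩
      have hval : α v = β v := by
        have hc := congrFun heq v
        simpa [restrictA, hvVq] using hc
      simp [restrictA, extA, updateA, hv, hvx, hval]
  · simp [restrictA, hv]

lemma team_eq_empty_of_restrict_subset {Y : Team Var A} (W : Set Var)
    (h : restrictT Y W ⊆ restrictT (∅ : Team Var A) W) : Y = ∅ := by
  have he : restrictT Y W = ∅ := Set.subset_empty_iff.mp (by simpa [restrictT] using h)
  by_contra hne
  obtain ⟨α, hα⟩ := Set.nonempty_iff_ne_empty.mpr hne
  exact absurd (he ▸ restrictA_mem_restrictT hα W) (Set.notMem_empty _)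

lemma restrictT_eq_empty {X : Team Var A} {W : Set Var}
    (h : restrictT X W = ∅) : X = ∅ := by
  by_contra hne
  obtain ⟨α, hα⟩ := Set.nonempty_iff_ne_empty.mpr hne
  exact absurd (h ▸ restrictA_mem_restrictT hα W) (Set.notMem_empty _)

lemma atomSat_congr (𝔄 : Struct RSym ar) (R : RSym) (xs : Fin (ar R) → Var)
    {α β : Asg Var 𝔄.A}
    (h : restrictA α (Set.range xs) = restrictA β (Set.range xs)) :
    atomSat 𝔄 R xs α ↔ atomSat 𝔄 R xs β := by
  have key : ∀ i, α (xs i) = β (xs i) := by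
    intro i
    have hc := congrFun h (xs i)
    simpa [restrictA, Set.mem_range_self i] using hc
  constructor <;> rintro ⟨v, hv, hR⟩
  · exact ⟨v, fun i => (key i) ▸ hv i, hR⟩
  · exact ⟨v, fun i => (key i) ▸ hv i, hR⟩

theorem refine_aux (𝔄 : Struct RSym ar) (φ : Formula Var RSym ar) :
    ∀ 𝕏 𝕏' : Hyperteam Var 𝔄.A, inclW (freev φ) 𝕏 𝕏' →
    (sat 𝔄 φ .EA 𝕏 → sat 𝔄 φ .EA 𝕏') ∧ (sat 𝔄 φ .AE 𝕏' → sat 𝔄 φ .AE 𝕏) := by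
  induction φ with
  | fls =>
    intro 𝕏 𝕏' h
    rw [inclW_iff] at h
    constructor
    · intro hE
      simp only [sat] at hE ⊢
      obtain ⟨Y, hY, hsub⟩ := h ∅ hE
      have : Y = ∅ := team_eq_empty_of_restrict_subset _ hsub
      exact this ▸ hY
    · intro hA
      simp only [sat] at hA ⊢
      rw [Set.eq_empty_iff_forall_notMem]
      intro X hX
      obtain ⟨Y, hY, -⟩ := h X hX
      exact absurd hY (by simp [hA])
  | tru =>
    intro 𝕏 𝕏' h
    rw [inclW_iff] at h
    constructor
    · intro hE
      simp only [sat] at hE ⊢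
      obtain ⟨X, hX⟩ := Set.nonempty_iff_ne_empty.mpr hE
      obtain ⟨Y, hY, -⟩ := h X hX
      exact Set.nonempty_iff_ne_empty.mp ⟨Y, hY⟩
    · intro hA
      simp only [sat] at hA ⊢
      intro hmem
      obtain ⟨Y, hY, hsub⟩ := h ∅ hmem
      have : Y = ∅ := team_eq_empty_of_restrict_subset _ hsub
      exact hA (this ▸ hY)
  | atom R xs =>
    intro 𝕏 𝕏' h
    rw [inclW_iff] at h
    constructor
    · intro hE
      simp only [sat] at hE ⊢
      obtain ⟨X, hX, hall⟩ := hE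
      obtain ⟨Y, hY, hsub⟩ := h X hX
      refine ⟨Y, hY, fun β hβ => ?_⟩
      obtain ⟨α, hα, heq⟩ := hsub (restrictA_mem_restrictT hβ _)
      exact (atomSat_congr 𝔄 R xs (show restrictA α (Set.range xs)
        = restrictA β (Set.range xs) from by simpa [freev] using heq)).mp (hall α hα)
    · intro hA
      simp only [sat] at hA ⊢
      intro X hX
      obtain ⟨Y, hY, hsub⟩ := h X hX
      obtain ⟨β, hβ, hsat⟩ := hA Y hY
      obtain ⟨α, hα, heq⟩ := hsub (restrictA_mem_restrictT hβ _)
      exact ⟨α, hα, (atomSat_congr 𝔄 R xs (show restrictA α (Set.range xs)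
        = restrictA β (Set.range xs) from by simpa [freev] using heq)).mpr hsat⟩
  | not φ ih =>
    intro 𝕏 𝕏' h
    have h' : inclW (freev φ) 𝕏 𝕏' := by simpa [freev] using h
    constructor
    · intro hE
      simp only [sat, Flag.dual] at hE ⊢
      exact fun hc => hE ((ih 𝕏 𝕏' h').2 hc)
    · intro hA
      simp only [sat, Flag.dual] at hA ⊢
      exact fun hc => hA ((ih 𝕏 𝕏' h').1 hc)
  | and φ ψ ihφ ihψ =>
    intro 𝕏 𝕏' h
    have hφ : freev φ ⊆ freev (Formula.and φ ψ) := by simp [freev]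
    have hψ : freev ψ ⊆ freev (Formula.and φ ψ) := by simp [freev]
    constructor
    · intro hE
      simp only [sat] at hE ⊢
      intro 𝕏₁' 𝕏₂' hbp'
      obtain ⟨𝕏₁, 𝕏₂, hbp, hin1, hin2⟩ := bipart_transfer h hbp'
      rcases hE 𝕏₁ 𝕏₂ hbp with hc | hc
      · exact Or.inl ((ihφ 𝕏₁ 𝕏₁' (inclW_mono hφ hin1)).1 hc)
      · exact Or.inr ((ihψ 𝕏₂ 𝕏₂' (inclW_mono hψ hin2)).1 hc)
    · intro hA
      simp only [sat] at hA ⊢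
      intro 𝕏₁ 𝕏₂ hbp
      obtain ⟨𝕐₁, 𝕐₂, hbp', hin1, hin2⟩ := bipart_transfer (inclW_dual h) hbp
      rcases hA 𝕐₁ 𝕐₂ hbp' with hc | hc
      · exact Or.inl ((ihφ 𝕐₁ 𝕏₁ (inclW_mono hφ hin1)).1 hc)
      · exact Or.inr ((ihψ 𝕐₂ 𝕏₂ (inclW_mono hψ hin2)).1 hc)
  | or φ ψ ihφ ihψ =>
    intro 𝕏 𝕏' h
    have hφ : freev φ ⊆ freev (Formula.or φ ψ) := by simp [freev]
    have hψ : freev ψ ⊆ freev (Formula.or φ ψ) := by simp [freev]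
    constructor
    · intro hE
      simp only [sat] at hE ⊢
      obtain ⟨𝕏₁, 𝕏₂, hbp, h1, h2⟩ := hE
      obtain ⟨𝕐₁, 𝕐₂, hbp', hin1, hin2⟩ := bipart_transfer (inclW_dual h) hbp
      exact ⟨𝕐₁, 𝕐₂, hbp', (ihφ 𝕐₁ 𝕏₁ (inclW_mono hφ hin1)).2 h1,
        (ihψ 𝕐₂ 𝕏₂ (inclW_mono hψ hin2)).2 h2⟩
    · intro hA
      simp only [sat] at hA ⊢
      obtain ⟨𝕏₁', 𝕏₂', hbp', h1, h2⟩ := hA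
      obtain ⟨𝕏₁, 𝕏₂, hbp, hin1, hin2⟩ := bipart_transfer h hbp'
      exact ⟨𝕏₁, 𝕏₂, hbp, (ihφ 𝕏₁ 𝕏₁' (inclW_mono hφ hin1)).2 h1,
        (ihψ 𝕏₂ 𝕏₂' (inclW_mono hψ hin2)).2 h2⟩
  | ex s W x φ ih =>
    intro 𝕏 𝕏' h
    have h1 : freev φ \ {x} ⊆ freev (Formula.ex s W x φ) := by
      by_cases hx : x ∈ freev φ <;> simp [freev, hx, Set.diff_subset]
    have h2 : x ∈ freev φ → denot s W ⊆ freev (Formula.ex s W x φ) := by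
      intro hx
      simp [freev, hx]
    constructor
    · intro hE
      simp only [sat] at hE ⊢
      exact (ih _ _ (inclW_ext h1 h2 h)).1 hE
    · intro hA
      simp only [sat] at hA ⊢
      exact (ih _ _ (inclW_ext h1 h2 (inclW_dual h))).1 hA
  | all s W x φ ih =>
    intro 𝕏 𝕏' h
    have h1 : freev φ \ {x} ⊆ freev (Formula.all s W x φ) := by
      by_cases hx : x ∈ freev φ <;> simp [freev, hx, Set.diff_subset]
    have h2 : x ∈ freev φ → denot s W ⊆ freev (Formula.all s W x φ) := by
      intro hx
      simp [freev, hx]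
    constructor
    · intro hE
      simp only [sat] at hE ⊢
      exact (ih _ _ (inclW_ext h1 h2 (inclW_dual h))).2 hE
    · intro hA
      simp only [sat] at hA ⊢
      exact (ih _ _ (inclW_ext h1 h2 h)).2 hA


/-- Hyperteam Refinement. -/
theorem hyperteam_refinement {Var RSym : Type} {ar : RSym → ℕ}
    (𝔄 : Struct RSym ar) (φ : Formula Var RSym ar)
    (𝕏 𝕏' : Hyperteam Var 𝔄.A)
    (h𝕏 : OverSup 𝕏 (supv φ)) (h𝕏' : OverSup 𝕏' (supv φ))
    (hinc : inclW (freev φ) 𝕏 𝕏') :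
    (sat 𝔄 φ .EA 𝕏 → sat 𝔄 φ .EA 𝕏') ∧
    (sat 𝔄 φ .AE 𝕏' → sat 𝔄 φ .AE 𝕏) := by
  exact refine_aux 𝔄 φ 𝕏 𝕏' hinc

end ADIF
end

section
/- (Double Dualisation) For every ADIF formula φ, every hyperteam 𝕏 over a superset of sup(φ), and every alternation flag α ∈ {∃∀,∀∃}: 𝔄, 𝕏 ⊨^α φ iff 𝔄, (𝕏~)~ ⊨^α φ iff 𝔄, 𝕏~ ⊨^{α~} φ. -/
open scoped Classical

namespace ADIF

variable {Var RSym : Type} {ar : RSym → ℕ} {A : Type}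

private lemma exists_choice_on (𝕏 : Hyperteam Var A) (P : Team Var A → Asg Var A → Prop)
    (h : ∀ X ∈ 𝕏, ∃ α ∈ X, P X α) :
    ∃ χ : Team Var A → Asg Var A, ∀ X ∈ 𝕏, χ X ∈ X ∧ P X (χ X) := by
  choose! χ hmem hP using h
  exact ⟨χ, fun X hX => ⟨hmem X hX, hP X hX⟩⟩

private lemma dualH_anti {𝕏 𝕐 : Hyperteam Var A} (h : incl 𝕏 𝕐) :
    incl (dualH 𝕐) (dualH 𝕏) := by
  rintro Y ⟨χ, hχ, rfl⟩
  have h' : ∀ X ∈ 𝕏, ∃ α ∈ X, α ∈ χ '' 𝕐 := by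
    intro X hX
    obtain ⟨X', hX', hsub⟩ := h X hX
    exact ⟨χ X', hsub (hχ X' hX'), Set.mem_image_of_mem _ hX'⟩
  obtain ⟨ξ, hξ⟩ := exists_choice_on 𝕏 _ h'
  refine ⟨ξ '' 𝕏, ⟨ξ, fun X hX => (hξ X hX).1, rfl⟩, ?_⟩
  rintro _ ⟨X, hX, rfl⟩
  exact (hξ X hX).2

private lemma incl_dd (𝕏 : Hyperteam Var A) : incl 𝕏 (dualH (dualH 𝕏)) := by
  intro X hX
  have h' : ∀ Y ∈ dualH 𝕏, ∃ α ∈ Y, α ∈ X := by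
    rintro Y ⟨χ, hχ, rfl⟩
    exact ⟨χ X, Set.mem_image_of_mem _ hX, hχ X hX⟩
  obtain ⟨ξ, hξ⟩ := exists_choice_on (dualH 𝕏) _ h'
  refine ⟨ξ '' dualH 𝕏, ⟨ξ, fun Y hY => (hξ Y hY).1, rfl⟩, ?_⟩
  rintro _ ⟨Y, hY, rfl⟩
  exact (hξ Y hY).2

private lemma dd_incl (𝕏 : Hyperteam Var A) : incl (dualH (dualH 𝕏)) 𝕏 := by
  rintro _ ⟨ξ, hξ, rfl⟩
  by_contra h
  push_neg at h
  have h' : ∀ X ∈ 𝕏, ∃ α ∈ X, α ∉ ξ '' dualH 𝕏 := by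
    intro X hX
    exact Set.not_subset.mp (h X hX)
  obtain ⟨χ, hχ⟩ := exists_choice_on 𝕏 _ h'
  have hY : χ '' 𝕏 ∈ dualH 𝕏 := ⟨χ, fun X hX => (hχ X hX).1, rfl⟩
  obtain ⟨X, hX, hEq⟩ := hξ _ hY
  refine (hχ X hX).2 ?_
  rw [hEq]
  exact Set.mem_image_of_mem ξ hY

private lemma bipart_refine {𝕏 𝕐 : Hyperteam Var A} (h : incl 𝕏 𝕐)
    {𝕐₁ 𝕐₂ : Hyperteam Var A} (hb : Bipartition 𝕐₁ 𝕐₂ 𝕐) :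
    ∃ 𝕏₁ 𝕏₂, Bipartition 𝕏₁ 𝕏₂ 𝕏 ∧ incl 𝕏₁ 𝕐₁ ∧ incl 𝕏₂ 𝕐₂ := by
  classical
  choose! w hw₁ hw₂ using h
  refine ⟨{X | X ∈ 𝕏 ∧ w X ∈ 𝕐₁}, {X | X ∈ 𝕏 ∧ w X ∉ 𝕐₁}, ⟨?_, ?_⟩, ?_, ?_⟩
  · ext X
    simp only [Set.mem_inter_iff, Set.mem_setOf_eq, Set.mem_empty_iff_false, iff_false]
    tauto
  · ext X
    simp only [Set.mem_union, Set.mem_setOf_eq]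
    tauto
  · rintro X ⟨hX, hw⟩
    exact ⟨w X, hw, hw₂ X hX⟩
  · rintro X ⟨hX, hw⟩
    have hmem : w X ∈ 𝕐₁ ∪ 𝕐₂ := by rw [hb.2]; exact hw₁ X hX
    exact ⟨w X, hmem.resolve_left hw, hw₂ X hX⟩

private lemma extH_mono {𝕏 𝕐 : Hyperteam Var A} (W : Set Var) (x : Var) (h : incl 𝕏 𝕐) :
    incl (extH W 𝕏 x) (extH W 𝕐 x) := by
  rintro _ ⟨X, hX, F, hF, rfl⟩
  obtain ⟨X', hX', hsub⟩ := h X hX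
  exact ⟨extT X' F x, ⟨X', hX', F, hF, rfl⟩, Set.image_mono hsub⟩

private lemma andsem_mono {𝕏 𝕐 : Hyperteam Var A} (h : incl 𝕏 𝕐)
    {p q : Hyperteam Var A → Prop}
    (hp : ∀ ⦃U V : Hyperteam Var A⦄, incl U V → p U → p V)
    (hq : ∀ ⦃U V : Hyperteam Var A⦄, incl U V → q U → q V)
    (H : ∀ 𝕏₁ 𝕏₂, Bipartition 𝕏₁ 𝕏₂ 𝕏 → p 𝕏₁ ∨ q 𝕏₂) :
    ∀ 𝕐₁ 𝕐₂, Bipartition 𝕐₁ 𝕐₂ 𝕐 → p 𝕐₁ ∨ q 𝕐₂ := by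
  intro 𝕐₁ 𝕐₂ hb
  obtain ⟨𝕏₁, 𝕏₂, hb', h₁, h₂⟩ := bipart_refine h hb
  rcases H 𝕏₁ 𝕏₂ hb' with hh | hh
  · exact Or.inl (hp h₁ hh)
  · exact Or.inr (hq h₂ hh)

private lemma orsem_mono {𝕏 𝕐 : Hyperteam Var A} (h : incl 𝕏 𝕐)
    {p q : Hyperteam Var A → Prop}
    (hp : ∀ ⦃U V : Hyperteam Var A⦄, incl U V → p V → p U)
    (hq : ∀ ⦃U V : Hyperteam Var A⦄, incl U V → q V → q U)
    (H : ∃ 𝕐₁ 𝕐₂, Bipartition 𝕐₁ 𝕐₂ 𝕐 ∧ p 𝕐₁ ∧ q 𝕐₂) :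
    ∃ 𝕏₁ 𝕏₂, Bipartition 𝕏₁ 𝕏₂ 𝕏 ∧ p 𝕏₁ ∧ q 𝕏₂ := by
  obtain ⟨𝕐₁, 𝕐₂, hb, hp₁, hq₂⟩ := H
  obtain ⟨𝕏₁, 𝕏₂, hb', h₁, h₂⟩ := bipart_refine h hb
  exact ⟨𝕏₁, 𝕏₂, hb', hp h₁ hp₁, hq h₂ hq₂⟩

private lemma sat_mono (𝔄 : Struct RSym ar) (φ : Formula Var RSym ar) :
    ∀ 𝕏 𝕐 : Hyperteam Var 𝔄.A, incl 𝕏 𝕐 →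
      (sat 𝔄 φ .EA 𝕏 → sat 𝔄 φ .EA 𝕐) ∧ (sat 𝔄 φ .AE 𝕐 → sat 𝔄 φ .AE 𝕏) := by
  induction φ with
  | fls =>
    intro 𝕏 𝕐 h
    constructor
    · intro hs
      simp only [sat] at hs ⊢
      obtain ⟨X, hX, hsub⟩ := h ∅ hs
      rwa [Set.subset_empty_iff.mp hsub] at hX
    · intro hs
      simp only [sat] at hs ⊢
      rw [Set.eq_empty_iff_forall_notMem]
      intro X hX
      obtain ⟨X', hX', _⟩ := h X hX
      rw [hs] at hX'
      exact hX'
  | tru =>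
    intro 𝕏 𝕐 h
    constructor
    · intro hs
      simp only [sat] at hs ⊢
      obtain ⟨X, hX⟩ := Set.nonempty_iff_ne_empty.mpr hs
      obtain ⟨X', hX', _⟩ := h X hX
      exact Set.nonempty_iff_ne_empty.mp ⟨X', hX'⟩
    · intro hs
      simp only [sat] at hs ⊢
      intro hmem
      obtain ⟨X', hX', hsub⟩ := h ∅ hmem
      rw [Set.subset_empty_iff.mp hsub] at hX'
      exact hs hX'
  | atom R xs =>
    intro 𝕏 𝕐 h
    constructor
    · rintro ⟨X, hX, hall⟩
      obtain ⟨X', hX', hsub⟩ := h X hX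
      exact ⟨X', hX', fun α hα => hall α (hsub hα)⟩
    · intro hs X hX
      obtain ⟨X', hX', hsub⟩ := h X hX
      obtain ⟨α, hα, hg⟩ := hs X' hX'
      exact ⟨α, hsub hα, hg⟩
  | not φ ih =>
    intro 𝕏 𝕐 h
    constructor
    · intro hs
      simp only [sat, Flag.dual] at hs ⊢
      exact fun hc => hs ((ih 𝕏 𝕐 h).2 hc)
    · intro hs
      simp only [sat, Flag.dual] at hs ⊢
      exact fun hc => hs ((ih 𝕏 𝕐 h).1 hc)
  | and φ ψ ihφ ihψ =>
    intro 𝕏 𝕐 h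
    constructor
    · intro hs
      simp only [sat] at hs ⊢
      exact andsem_mono h (fun U V hUV => (ihφ U V hUV).1)
        (fun U V hUV => (ihψ U V hUV).1) hs
    · intro hs
      simp only [sat] at hs ⊢
      exact andsem_mono (dualH_anti h) (fun U V hUV => (ihφ U V hUV).1)
        (fun U V hUV => (ihψ U V hUV).1) hs
  | or φ ψ ihφ ihψ =>
    intro 𝕏 𝕐 h
    constructor
    · intro hs
      simp only [sat] at hs ⊢
      exact orsem_mono (dualH_anti h) (fun U V hUV => (ihφ U V hUV).2)
        (fun U V hUV => (ihψ U V hUV).2) hs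
    · intro hs
      simp only [sat] at hs ⊢
      exact orsem_mono h (fun U V hUV => (ihφ U V hUV).2)
        (fun U V hUV => (ihψ U V hUV).2) hs
  | ex s W x φ ihφ =>
    intro 𝕏 𝕐 h
    constructor
    · intro hs
      simp only [sat] at hs ⊢
      exact (ihφ _ _ (extH_mono _ _ h)).1 hs
    · intro hs
      simp only [sat] at hs ⊢
      exact (ihφ _ _ (extH_mono _ _ (dualH_anti h))).1 hs
  | all s W x φ ihφ =>
    intro 𝕏 𝕐 h
    constructor
    · intro hs
      simp only [sat] at hs ⊢
      exact (ihφ _ _ (extH_mono _ _ (dualH_anti h))).2 hs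
    · intro hs
      simp only [sat] at hs ⊢
      exact (ihφ _ _ (extH_mono _ _ h)).2 hs

private lemma sat_dd (𝔄 : Struct RSym ar) (φ : Formula Var RSym ar)
    (fl : Flag) (𝕏 : Hyperteam Var 𝔄.A) :
    sat 𝔄 φ fl 𝕏 ↔ sat 𝔄 φ fl (dualH (dualH 𝕏)) := by
  cases fl
  · exact ⟨(sat_mono 𝔄 φ 𝕏 _ (incl_dd 𝕏)).1, (sat_mono 𝔄 φ _ 𝕏 (dd_incl 𝕏)).1⟩
  · exact ⟨(sat_mono 𝔄 φ _ 𝕏 (dd_incl 𝕏)).2, (sat_mono 𝔄 φ 𝕏 _ (incl_dd 𝕏)).2⟩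

private lemma dualH_eq_empty {𝕏 : Hyperteam Var A} : dualH 𝕏 = ∅ ↔ ∅ ∈ 𝕏 := by
  constructor
  · intro h
    by_contra hne
    have hch : ∀ X ∈ 𝕏, ∃ α ∈ X, True := by
      intro X hX
      rcases Set.eq_empty_or_nonempty X with rfl | ⟨α, hα⟩
      · exact absurd hX hne
      · exact ⟨α, hα, trivial⟩
    obtain ⟨χ, hχ⟩ := exists_choice_on 𝕏 _ hch
    have : (χ '' 𝕏) ∈ dualH 𝕏 := ⟨χ, fun X hX => (hχ X hX).1, rfl⟩
    rw [h] at this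
    exact this
  · intro h
    rw [Set.eq_empty_iff_forall_notMem]
    rintro Y ⟨χ, hχ, rfl⟩
    exact absurd (hχ ∅ h) (Set.notMem_empty _)

private lemma empty_mem_dualH {𝕏 : Hyperteam Var A} : ∅ ∈ dualH 𝕏 ↔ 𝕏 = ∅ := by
  constructor
  · rintro ⟨χ, hχ, h⟩
    exact Set.image_eq_empty.mp h.symm
  · rintro rfl
    exact ⟨fun _ => emptyAsg Var A, by simp, by simp⟩

private lemma forall_exists_dual (G : Asg Var A → Prop) (𝕏 : Hyperteam Var A) :
    (∃ X ∈ 𝕏, ∀ α ∈ X, G α) ↔ ∀ Y ∈ dualH 𝕏, ∃ α ∈ Y, G α := by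
  constructor
  · rintro ⟨X, hX, hall⟩ Y ⟨χ, hχ, rfl⟩
    exact ⟨χ X, Set.mem_image_of_mem _ hX, hall _ (hχ X hX)⟩
  · intro H
    by_contra h
    push_neg at h
    obtain ⟨χ, hχ⟩ := exists_choice_on 𝕏 (fun _ α => ¬ G α) h
    obtain ⟨α, hα, hG⟩ := H (χ '' 𝕏) ⟨χ, fun X hX => (hχ X hX).1, rfl⟩
    obtain ⟨X, hX, rfl⟩ := hα
    exact (hχ X hX).2 hG

private lemma exists_forall_dual (G : Asg Var A → Prop) (𝕏 : Hyperteam Var A) :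
    (∀ X ∈ 𝕏, ∃ α ∈ X, G α) ↔ ∃ Y ∈ dualH 𝕏, ∀ α ∈ Y, G α := by
  constructor
  · intro H
    obtain ⟨χ, hχ⟩ := exists_choice_on 𝕏 (fun _ α => G α) H
    refine ⟨χ '' 𝕏, ⟨χ, fun X hX => (hχ X hX).1, rfl⟩, ?_⟩
    rintro _ ⟨X, hX, rfl⟩
    exact (hχ X hX).2
  · rintro ⟨Y, ⟨χ, hχ, rfl⟩, hall⟩ X hX
    exact ⟨χ X, hχ X hX, hall _ (Set.mem_image_of_mem _ hX)⟩

private lemma sat_dual (𝔄 : Struct RSym ar) (φ : Formula Var RSym ar) :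
    ∀ (fl : Flag) (𝕏 : Hyperteam Var 𝔄.A),
      sat 𝔄 φ fl 𝕏 ↔ sat 𝔄 φ fl.dual (dualH 𝕏) := by
  induction φ with
  | fls =>
    rintro (_|_) 𝕏
    · simp only [sat, Flag.dual]
      exact dualH_eq_empty.symm
    · simp only [sat, Flag.dual]
      exact empty_mem_dualH.symm
  | tru =>
    rintro (_|_) 𝕏
    · simp only [sat, Flag.dual]
      exact not_congr empty_mem_dualH.symm
    · simp only [sat, Flag.dual]
      exact not_congr dualH_eq_empty.symm
  | atom R xs =>
    rintro (_|_) 𝕏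
    · simp only [sat, Flag.dual]
      exact forall_exists_dual _ 𝕏
    · simp only [sat, Flag.dual]
      exact exists_forall_dual _ 𝕏
  | not φ ih =>
    intro fl 𝕏
    simp only [sat]
    exact not_congr (ih fl.dual 𝕏)
  | and φ ψ ihφ ihψ =>
    rintro (_|_) 𝕏
    · refine (sat_dd 𝔄 _ .EA 𝕏).trans ?_
      simp only [sat, Flag.dual]
    · simp only [sat, Flag.dual]
  | or φ ψ ihφ ihψ =>
    rintro (_|_) 𝕏
    · simp only [sat, Flag.dual]
    · refine (sat_dd 𝔄 _ .AE 𝕏).trans ?_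
      simp only [sat, Flag.dual]
  | ex s W x φ ihφ =>
    rintro (_|_) 𝕏
    · refine (sat_dd 𝔄 _ .EA 𝕏).trans ?_
      simp only [sat, Flag.dual]
    · simp only [sat, Flag.dual]
  | all s W x φ ihφ =>
    rintro (_|_) 𝕏
    · simp only [sat, Flag.dual]
    · refine (sat_dd 𝔄 _ .AE 𝕏).trans ?_
      simp only [sat, Flag.dual]


/-- Double Dualisation. -/
theorem double_dualisation {Var RSym : Type} {ar : RSym → ℕ}
    (𝔄 : Struct RSym ar) (φ : Formula Var RSym ar)
    (𝕏 : Hyperteam Var 𝔄.A) (h𝕏 : OverSup 𝕏 (supv φ)) (fl : Flag) :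
    (sat 𝔄 φ fl 𝕏 ↔ sat 𝔄 φ fl (dualH (dualH 𝕏))) ∧
    (sat 𝔄 φ fl 𝕏 ↔ sat 𝔄 φ fl.dual (dualH 𝕏)) := by
  exact ⟨sat_dd 𝔄 φ fl 𝕏, sat_dual 𝔄 φ fl 𝕏⟩

end ADIF
end

section
/- (Law of Excluded Middle) Let φ be an ADIF sentence, i.e. an ADIF formula with free(φ) = ∅, and 𝔄 a structure. Then either 𝔄 ⊨ φ or 𝔄 ⊨ ¬φ, where 𝔄 ⊨ ψ means that ψ is both ∃∀-satisfiable on 𝔄 and ∀∃-satisfiable on 𝔄. -/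
open scoped Classical

namespace ADIF

/-!
A sentence has empty support, so it is evaluated on the proper hyperteam `{{∅}}` over no
variables. A hyperteam `{{α}}` is its own dual and every choice function on it picks `α`, so
`∃∀`- and `∀∃`-satisfaction coincide on it for every formula. Hence `φ` holds there in both
senses, or fails in both, and then `¬φ` holds in both.
-/

variable {Var RSym : Type} {ar : RSym → ℕ} {A : Type}

theorem supv_subset_freev (φ : Formula Var RSym ar) : supv φ ⊆ freev φ := by
  induction φ with
  | fls | tru | atom => simp [supv, freev]
  | not φ ih => exact ih
  | and φ ψ ih₁ ih₂ | or φ ψ ih₁ ih₂ => exact Set.union_subset_union ih₁ ih₂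
  | ex s W x φ ih | all s W x φ ih =>
    simp only [supv, freev]
    split_ifs
    · exact (Set.sdiff_subset_sdiff_left ih).trans Set.subset_union_left
    · exact Set.sdiff_subset.trans ih

theorem dom_emptyAsg : dom (emptyAsg Var A) = ∅ := by
  simp [dom, emptyAsg]

theorem hyperteamOn_singleton (α : Asg Var A) : HyperteamOn {{α}} (dom α) := by
  rintro X rfl β rfl
  rfl

theorem proper_singleton (α : Asg Var A) : Proper ({{α}} : Hyperteam Var A) :=
  ⟨Set.singleton_ne_empty _, fun h => Set.singleton_ne_empty α (Set.mem_singleton_iff.mp h).symm⟩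

theorem dualH_singleton (α : Asg Var A) : dualH ({{α}} : Hyperteam Var A) = {{α}} := by
  ext Y
  constructor
  · rintro ⟨χ, hχ, rfl⟩
    rw [Set.image_singleton, hχ {α} rfl]
    rfl
  · rintro rfl
    exact ⟨fun _ => α, fun X hX => hX ▸ rfl, by rw [Set.image_singleton]⟩

theorem sat_EA_iff_sat_AE_singleton (𝔄 : Struct RSym ar) (φ : Formula Var RSym ar)
    (α : Asg Var 𝔄.A) : sat 𝔄 φ .EA {{α}} ↔ sat 𝔄 φ .AE {{α}} := by
  induction φ with
  | fls =>
    simp only [sat, Set.mem_singleton_iff, Set.singleton_ne_empty, iff_false]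
    exact fun h => Set.singleton_ne_empty α h.symm
  | tru =>
    simp only [sat, ne_eq, Set.singleton_ne_empty, not_false_eq_true, true_iff]
    exact fun h => Set.singleton_ne_empty α (Set.mem_singleton_iff.mp h).symm
  | atom => simp [sat]
  | not φ ih => exact not_congr ih.symm
  | and | or | ex | all => simp only [sat, dualH_singleton]

/-- Law of Excluded Middle. For every ADIF sentence `φ`,
either `𝔄 ⊨ φ` or `𝔄 ⊨ ¬φ`, where `𝔄 ⊨ ψ` means that `ψ` is both
`∃∀`- and `∀∃`-satisfiable on `𝔄`. -/
theorem law_of_excluded_middle {Var RSym : Type} {ar : RSym → ℕ}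
    (𝔄 : Struct RSym ar) (φ : Formula Var RSym ar)
    (hsent : freev φ = (∅ : Set Var)) :
    (SatOn 𝔄 .EA φ ∧ SatOn 𝔄 .AE φ) ∨
    (SatOn 𝔄 .EA (Formula.not φ) ∧ SatOn 𝔄 .AE (Formula.not φ)) := by
  have hsup : supv φ = ∅ := Set.subset_empty_iff.mp (hsent ▸ supv_subset_freev φ)
  have hOn : HyperteamOn {{emptyAsg Var 𝔄.A}} (supv φ) := by
    rw [hsup, ← dom_emptyAsg]
    exact hyperteamOn_singleton _
  have hproper := proper_singleton (emptyAsg Var 𝔄.A)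
  have hflags := sat_EA_iff_sat_AE_singleton 𝔄 φ (emptyAsg Var 𝔄.A)
  by_cases h : sat 𝔄 φ .EA {{emptyAsg Var 𝔄.A}}
  · exact .inl ⟨⟨_, hOn, hproper, h⟩, ⟨_, hOn, hproper, hflags.mp h⟩⟩
  · exact .inr ⟨⟨_, hOn, hproper, mt hflags.mpr h⟩, ⟨_, hOn, hproper, h⟩⟩

end ADIF
end
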